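/- If the series converges at some real R₀ > 1 and f(R₀) < 1, then Σ_{n≥1} n·aₙ converges and 0 ≤ f′(1) = Σ_{n≥1} n·aₙ ≤ (f(R₀) − f(1))/(R₀ − 1) < (1 − f(1))/(R₀ − 1) ≤ 1/(R₀ − 1). -/

import Mathlib

/-!
Everything rests on the mean-value inequality `n rⁿ⁻¹ (R - r) ≤ Rⁿ - rⁿ` for `0 ≤ r ≤ R`.
Multiplied by `aₙ ≥ 0`, it dominates the differentiated series on `|z| ≤ r < R` termwise by
`aₙ Rⁿ / (R - r)`, so `f` may be differentiated termwise there; summed at `r = 1`, it is the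
slope bound `(R - 1) f′(1) ≤ f(R) - f(1)`.
-/

open MeasureTheory Filter
open scoped ENNReal NNReal Classical

/-- Setup for a free product of two graphs `V₁ ∗ V₂`: two disjoint countable vertex
sets with roots, each with at least two elements, transition matrices whose rows sum
to one, every vertex reachable from the root, a uniform positive lower bound `ε₀` on
the positive entries, and a mixing parameter `α ∈ (0,1)`. -/
structure Setup (V₁ : Type) (V₂ : Type) [Countable V₁] [Countable V₂]
    [DecidableEq V₁] [DecidableEq V₂] where
  o₁ : V₁
  o₂ : V₂
  nontrivial₁ : ∃ x : V₁, x ≠ o₁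
  nontrivial₂ : ∃ x : V₂, x ≠ o₂
  p₁ : V₁ → V₁ → ℝ
  p₂ : V₂ → V₂ → ℝ
  p₁_nonneg : ∀ x y, 0 ≤ p₁ x y
  p₂_nonneg : ∀ x y, 0 ≤ p₂ x y
  p₁_rowSum : ∀ x, HasSum (p₁ x) 1
  p₂_rowSum : ∀ x, HasSum (p₂ x) 1
  /-- every vertex of `V₁` is reachable from the root `o₁` with positive probability -/
  acc₁ : ∀ x : V₁, ∃ l : List V₁, List.Chain (fun u v => 0 < p₁ u v) o₁ l ∧
    (o₁ :: l).getLast (List.cons_ne_nil _ _) = x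
  acc₂ : ∀ x : V₂, ∃ l : List V₂, List.Chain (fun u v => 0 < p₂ u v) o₂ l ∧
    (o₂ :: l).getLast (List.cons_ne_nil _ _) = x
  ε₀ : ℝ
  ε₀_pos : 0 < ε₀
  ε₀_le₁ : ∀ x y, 0 < p₁ x y → ε₀ ≤ p₁ x y
  ε₀_le₂ : ∀ x y, 0 < p₂ x y → ε₀ ≤ p₂ x y
  α : ℝ
  α_pos : 0 < α
  α_lt_one : α < 1

namespace Setup

variable {V₁ V₂ : Type} [Countable V₁] [Countable V₂] [DecidableEq V₁] [DecidableEq V₂]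
variable (S : Setup V₁ V₂)

/-- A letter of the free product: an element of `V₁^× = V₁ ∖ {o₁}` or of `V₂^× = V₂ ∖ {o₂}`. -/
def Letter : Type := {x : V₁ // x ≠ S.o₁} ⊕ {x : V₂ // x ≠ S.o₂}

instance : DecidableEq S.Letter :=
  inferInstanceAs (DecidableEq ({x : V₁ // x ≠ S.o₁} ⊕ {x : V₂ // x ≠ S.o₂}))
instance : Countable S.Letter :=
  inferInstanceAs (Countable ({x : V₁ // x ≠ S.o₁} ⊕ {x : V₂ // x ≠ S.o₂}))

/-- the factor a letter belongs to: `true` for `V₁^×`, `false` for `V₂^×`. -/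
def ltype : S.Letter → Bool := Sum.elim (fun _ => true) (fun _ => false)

/-- An element of the free product `V = V₁ ∗ V₂`: a finite word over the alphabet
`V₁^× ∪ V₂^×` in which no two consecutive letters lie in the same factor. -/
def Word : Type := {l : List S.Letter // l.Chain' fun a b => S.ltype a ≠ S.ltype b}

instance : DecidableEq S.Word :=
  inferInstanceAs (DecidableEq {l : List S.Letter // l.Chain' fun a b => S.ltype a ≠ S.ltype b})
instance : Countable S.Word :=
  inferInstanceAs (Countable {l : List S.Letter // l.Chain' fun a b => S.ltype a ≠ S.ltype b})
instance : MeasurableSpace S.Word := ⊤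

/-- the empty word `o`. -/
def emp : S.Word := ⟨[], List.IsChain.nil⟩

/-- word length `‖u‖`. -/
def wlen (u : S.Word) : ℕ := u.val.length

/-- the last letter `[u]` of a word (`none` for the empty word). -/
def lastLetter (u : S.Word) : Option S.Letter := u.val.getLast?

/-- the type `τ(u)` of a word: the factor of its last letter (`none` for `o`). -/
def wtype (u : S.Word) : Option Bool := (u.val.getLast?).map S.ltype

/-- the factor of the first letter of a word (`none` for `o`). -/
def firstType (u : S.Word) : Option Bool := (u.val.head?).map S.ltype

/-- the cone `C(x)`: all words having `x` as a prefix. -/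
def cone (x : S.Word) : Set S.Word := {y | x.val <+: y.val}

/-- the one-letter word determined by a letter. -/
def single (g : S.Letter) : S.Word := ⟨[g], List.IsChain.singleton g⟩

/-- the word `u` with its last letter removed in case that letter lies in factor `i`
(so `u = (stripLast i u)·v` with `v ∈ Vᵢ`). -/
def stripLast (i : Bool) (u : S.Word) : List S.Letter :=
  if (u.val.getLast?).map S.ltype = some i then u.val.dropLast else u.val

/-- the `V₁`-component of the last letter of `u` (`o₁` if the last letter is not in `V₁^×`). -/
def lastIn₁ (u : S.Word) : V₁ :=
  ((u.val.getLast?).map (Sum.elim Subtype.val fun _ => S.o₁)).getD S.o₁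

/-- the `V₂`-component of the last letter of `u` (`o₂` if the last letter is not in `V₂^×`). -/
def lastIn₂ (u : S.Word) : V₂ :=
  ((u.val.getLast?).map (Sum.elim (fun _ => S.o₂) Subtype.val)).getD S.o₂

/-- the lift `p̄₁` of `P₁` to the free product: `p̄₁(xv,xw) = p₁(v,w)` for `v,w ∈ V₁`. -/
def pbar₁ (u w : S.Word) : ℝ :=
  if S.stripLast true u = S.stripLast true w then S.p₁ (S.lastIn₁ u) (S.lastIn₁ w) else 0

/-- the lift `p̄₂` of `P₂` to the free product. -/
def pbar₂ (u w : S.Word) : ℝ :=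
  if S.stripLast false u = S.stripLast false w then S.p₂ (S.lastIn₂ u) (S.lastIn₂ w) else 0

/-- the single-step transition probabilities `P = α·P̄₁ + (1−α)·P̄₂` of the random walk. -/
def step (u w : S.Word) : ℝ := S.α * S.pbar₁ u w + (1 - S.α) * S.pbar₂ u w

/-- single-step transition probabilities, as extended nonnegative reals. -/
noncomputable def stepE (u w : S.Word) : ℝ≥0∞ := ENNReal.ofReal (S.step u w)

/-- the `n`-step transition probabilities `p^{(n)}(x,y)`. -/
noncomputable def pn : ℕ → S.Word → S.Word → ℝ≥0∞
  | 0, u, w => if u = w then 1 else 0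
  | n + 1, u, w => ∑' v : S.Word, pn n u v * S.stepE v w

/-- `G′(x,x|1) = Σ_{n≥1} n·p^{(n)}(x,x)`, the derivative at `z = 1` of the Green
function `G(x,x|z)`. -/
noncomputable def Gderiv (x : S.Word) : ℝ≥0∞ := ∑' n : ℕ, (n : ℝ≥0∞) * S.pn n x x

/-- the assumption that all Green functions `G(x,y|z) = Σ p^{(n)}(x,y) zⁿ` have radius
of convergence at least `R` for some `R > 1`. -/
def GreenRadiusGT1 : Prop :=
  ∃ R : ℝ≥0, 1 < R ∧ ∀ x y : S.Word, ∀ r : ℝ≥0, r < R →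
    (∑' n : ℕ, S.pn n x y * (r : ℝ≥0∞) ^ n) ≠ ⊤

/-- `fvisit n y x` is the probability, starting at `y`, that the first visit to `x`
occurs exactly at time `n`. -/
noncomputable def fvisit : ℕ → S.Word → S.Word → ℝ≥0∞
  | 0, y, x => if y = x then 1 else 0
  | n + 1, y, x => if y = x then 0 else ∑' z : S.Word, S.stepE y z * fvisit n z x

/-- `U(x,x)`: the probability of returning to `x` when starting at `x`. -/
noncomputable def Uret (x : S.Word) : ℝ≥0∞ :=
  ∑' n : ℕ, ∑' z : S.Word, S.stepE x z * S.fvisit n z x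

/-- the exit times: `e₀ = 0` and `e_k = inf{m > e_{k−1} : ‖Xₙ‖ ≥ k for all n ≥ m}`
(`0` by convention if no such time exists). -/
noncomputable def eT : ℕ → (ℕ → S.Word) → ℕ
  | 0, _ => 0
  | k + 1, ω => sInf {m | eT k ω < m ∧ ∀ n ≥ m, k + 1 ≤ S.wlen (ω n)}

/-- `W_k = [X_{e_k}]`, the `k`-th stabilized letter. -/
noncomputable def Wlast (k : ℕ) (ω : ℕ → S.Word) : Option S.Letter :=
  S.lastLetter (ω (S.eT k ω))

/-- the set of vertices visited up to time `n`. -/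
def visited (n : ℕ) (ω : ℕ → S.Word) : Set S.Word := {x | ∃ j ≤ n, ω j = x}

/-- the shift `x⁻¹A` deleting the prefix `x` from each element of `A ⊆ C(x)`. -/
def wshift (x : S.Word) (A : Set S.Word) : Set S.Word := {y | ∃ a ∈ A, a.val = x.val ++ y.val}

/-- (the support of) `ψ_k`: for `k ≥ 2` the set obtained from
`{X₀,…,X_{e_k}} ∩ C(X_{e_{k−1}})` by deleting the prefix `X_{e_{k−1}}`; for `k = 1`
the set `{X₀,…,X_{e₁}} ∩ V*_{τ(X_{e₁})}`. -/
noncomputable def psi (k : ℕ) (ω : ℕ → S.Word) : Set S.Word :=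
  if k = 1 then
    {x | x ∈ S.visited (S.eT 1 ω) ω ∧ (x = S.emp ∨ S.firstType x = S.wtype (ω (S.eT 1 ω)))}
  else
    S.wshift (ω (S.eT (k - 1) ω)) (S.visited (S.eT k ω) ω ∩ S.cone (ω (S.eT (k - 1) ω)))

/-- the range `Rₙ = |{X₀,…,Xₙ}|`. -/
noncomputable def rangeCount (n : ℕ) (ω : ℕ → S.Word) : ℕ :=
  ((Finset.range (n + 1)).image ω).card

/-- the maximal exit time index `k(n) = max{k : e_k ≤ n}`. -/
noncomputable def kmax (n : ℕ) (ω : ℕ → S.Word) : ℕ := sSup {k | S.eT k ω ≤ n}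

end Setup

/-- A family of Markov measures for the random walk on the free product:
`P x` is the law of the walk started at `x`, so that the probability of any cylinder
`[X₀ = w₀, …, Xₙ = wₙ]` equals `δ_x(w₀)·∏ p(wᵢ, wᵢ₊₁)`. -/
structure RW {V₁ V₂ : Type} [Countable V₁] [Countable V₂] [DecidableEq V₁] [DecidableEq V₂]
    (S : Setup V₁ V₂) where
  P : S.Word → Measure (ℕ → S.Word)
  prob : ∀ x, IsProbabilityMeasure (P x)
  cyl : ∀ (x : S.Word) (n : ℕ) (w : Fin (n + 1) → S.Word),
    P x {ω | ∀ i : Fin (n + 1), ω (i : ℕ) = w i} =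
      (if w 0 = x then 1 else 0) * ∏ i : Fin n, S.stepE (w i.castSucc) (w i.succ)

namespace Setup

variable {V₁ V₂ : Type} [Countable V₁] [Countable V₂] [DecidableEq V₁] [DecidableEq V₂]
variable (S : Setup V₁ V₂)

/-- `ξᵢ = P[∃ n ≥ 1 : Xₙ ∈ Vᵢ^×]` (for the walk started at `o`). -/
noncomputable def xi (X : RW S) (i : Bool) : ℝ≥0∞ :=
  X.P S.emp {ω | ∃ n, 1 ≤ n ∧ S.wlen (ω n) = 1 ∧ S.wtype (ω n) = some i}

/-- `D_k`, the support of `(W_k, ψ_k)`. -/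
noncomputable def Dsupp (X : RW S) (k : ℕ) : Set (S.Letter × Set S.Word) :=
  {gf | 0 < X.P S.emp {ω | S.Wlast k ω = some gf.1 ∧ S.psi k ω = gf.2}}

/-- the event `[(W₁,ψ₁) = s₁, …, (W_k,ψ_k) = s_k]`. -/
noncomputable def histEvent (k : ℕ) (s : ℕ → S.Letter × Set S.Word) : Set (ℕ → S.Word) :=
  {ω | ∀ j, 1 ≤ j → j ≤ k → S.Wlast j ω = some (s j).1 ∧ S.psi j ω = (s j).2}

/-- `q` is a (homogeneous) transition kernel for the process `(W_k, ψ_k)_{k≥1}`: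
the conditional probability of the next state given the whole history depends only on
the current and the next state, via `q`. -/
def IsExitKernel (X : RW S) (q : S.Letter × Set S.Word → S.Letter × Set S.Word → ℝ≥0∞) : Prop :=
  ∀ k, 1 ≤ k → ∀ s : ℕ → S.Letter × Set S.Word,
    0 < X.P S.emp (S.histEvent k s) →
    X.P S.emp (S.histEvent (k + 1) s) = X.P S.emp (S.histEvent k s) * q (s k) (s (k + 1))

/-- `R̃₁` as a function of the state `(g,f)`: `|supp f ∖ C(g)|`. -/
noncomputable def RtilFun (gf : S.Letter × Set S.Word) : ℝ≥0∞ :=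
  ((gf.2 \ S.cone (S.single gf.1)).encard : ℝ≥0∞)

/-- `O₁` as a function of the state `(g,f)`: `|supp f ∩ C(g)|`. -/
noncomputable def OverFun (gf : S.Letter × Set S.Word) : ℝ≥0∞ :=
  ((gf.2 ∩ S.cone (S.single gf.1)).encard : ℝ≥0∞)

/-- cone of an optional letter. -/
def coneOpt : Option S.Letter → Set S.Word
  | some g => S.cone (S.single g)
  | none => ∅

/-- the overhead `O_k = |supp(ψ_k) ∩ C(W_k)|`. -/
noncomputable def Ocount (k : ℕ) (ω : ℕ → S.Word) : ℝ≥0∞ :=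
  ((S.psi k ω ∩ S.coneOpt (S.Wlast k ω)).encard : ℝ≥0∞)

/-- `|supp(ψ_k)|`. -/
noncomputable def psiCount (k : ℕ) (ω : ℕ → S.Word) : ℝ≥0∞ :=
  ((S.psi k ω).encard : ℝ≥0∞)

end Setup

/-- `n`-step transition powers of a kernel `q` on a countable state space. -/
noncomputable def kpow {σ : Type} (q : σ → σ → ℝ≥0∞) : ℕ → σ → σ → ℝ≥0∞
  | 0, s, t => if s = t then 1 else 0
  | n + 1, s, t => ∑' u : σ, kpow q n s u * q u t

/-- `π` is an invariant (stationary) probability measure, supported on `D`, of the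
chain with transition kernel `q`. -/
def IsStationaryDist {σ : Type} (q : σ → σ → ℝ≥0∞) (D : Set σ) (π : σ → ℝ≥0∞) : Prop :=
  (∑' s : σ, π s) = 1 ∧ (∀ s, s ∉ D → π s = 0) ∧ ∀ t, (∑' s : σ, π s * q s t) = π t

theorem natCast_mul_pow_pred_mul_sub_le_pow_sub_pow {α : Type*} [CommRing α] [LinearOrder α]
    [IsStrictOrderedRing α] {r R : α} (hr : 0 ≤ r) (hrR : r ≤ R) (n : ℕ) :
    n * r ^ (n - 1) * (R - r) ≤ R ^ n - r ^ n := by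
  rw [← geom_sum₂_mul, ← geom_sum₂_self]
  gcongr

section NonnegCoeffs

variable {a : ℕ → ℝ} {R r : ℝ}

theorem summable_mul_pow_of_le (ha : ∀ n, 0 ≤ a n) (hsum : Summable fun n => a n * R ^ n)
    (hr : 0 ≤ r) (hrR : r ≤ R) : Summable fun n => a n * r ^ n :=
  hsum.of_nonneg_of_le (fun n => by have := ha n; positivity)
    fun n => mul_le_mul_of_nonneg_left (pow_le_pow_left₀ hr hrR n) (ha n)

theorem sub_mul_natCast_mul_mul_pow_pred_le (ha : ∀ n, 0 ≤ a n) (hr : 0 ≤ r) (hrR : r ≤ R)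
    (n : ℕ) : (R - r) * (n * a n * r ^ (n - 1)) ≤ a n * R ^ n - a n * r ^ n := by
  linear_combination
    mul_le_mul_of_nonneg_left (natCast_mul_pow_pred_mul_sub_le_pow_sub_pow hr hrR n) (ha n)

theorem summable_natCast_mul_mul_pow_pred (ha : ∀ n, 0 ≤ a n)
    (hsum : Summable fun n => a n * R ^ n) (hr : 0 ≤ r) (hrR : r < R) :
    Summable fun n : ℕ => n * a n * r ^ (n - 1) := by
  refine (hsum.div_const (R - r)).of_nonneg_of_le (fun n => by have := ha n; positivity)
    fun n => ?_
  rw [le_div_iff₀' (sub_pos.2 hrR)]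
  have hterm := sub_mul_natCast_mul_mul_pow_pred_le ha hr hrR.le n
  have hr_term : 0 ≤ a n * r ^ n := by have := ha n; positivity
  linarith

theorem sub_mul_tsum_natCast_mul_mul_pow_pred_le (ha : ∀ n, 0 ≤ a n)
    (hsum : Summable fun n => a n * R ^ n) (hr : 0 ≤ r) (hrR : r < R) :
    (R - r) * ∑' n : ℕ, n * a n * r ^ (n - 1) ≤ ∑' n, a n * R ^ n - ∑' n, a n * r ^ n := by
  rw [← tsum_mul_left, ← hsum.tsum_sub (summable_mul_pow_of_le ha hsum hr hrR.le)]
  exact ((summable_natCast_mul_mul_pow_pred ha hsum hr hrR).mul_left _).tsum_le_tsum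
    (sub_mul_natCast_mul_mul_pow_pred_le ha hr hrR.le)
    (hsum.sub (summable_mul_pow_of_le ha hsum hr hrR.le))

theorem hasDerivAt_tsum_mul_pow (ha : ∀ n, 0 ≤ a n) (hsum : Summable fun n => a n * R ^ n)
    {x : ℝ} (hx : |x| < R) :
    HasDerivAt (fun z => ∑' n, a n * z ^ n) (∑' n : ℕ, n * a n * x ^ (n - 1)) x := by
  obtain ⟨r, hxr, hrR⟩ := exists_between hx
  have hr : 0 ≤ r := (abs_nonneg x).trans hxr.le
  have hx_mem : x ∈ Metric.ball (0 : ℝ) r := by simpa using hxr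
  have hsum_x : Summable fun n => a n * x ^ n :=
    (summable_mul_pow_of_le ha hsum (abs_nonneg x) hx.le).of_norm_bounded fun n => by
      simp [abs_of_nonneg (ha n)]
  have hderiv (n : ℕ) (y : ℝ) :
      HasDerivAt (fun z => a n * z ^ n) (n * a n * y ^ (n - 1)) y :=
    ((hasDerivAt_pow n y).const_mul (a n)).congr_deriv (by ring)
  have hbound (n : ℕ) (y : ℝ) (hy : y ∈ Metric.ball (0 : ℝ) r) :
      ‖(n : ℝ) * a n * y ^ (n - 1)‖ ≤ n * a n * r ^ (n - 1) := by
    rw [mem_ball_zero_iff, Real.norm_eq_abs] at hy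
    rw [Real.norm_eq_abs, abs_mul, abs_mul, abs_pow, Nat.abs_cast, abs_of_nonneg (ha n)]
    have := ha n
    gcongr
  exact hasDerivAt_tsum_of_isPreconnected (summable_natCast_mul_mul_pow_pred ha hsum hr hrR)
    Metric.isOpen_ball (convex_ball 0 r).isPreconnected (fun n y _ => hderiv n y) hbound
    hx_mem hsum_x hx_mem

end NonnegCoeffs

theorem power_series_deriv_bound_general (a : ℕ → ℝ) (ha : ∀ n, 0 ≤ a n)
    (R₀ : ℝ) (hR₀ : 1 < R₀)
    (hsum : Summable fun n : ℕ => a n * R₀ ^ n)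
    (hlt : (∑' n : ℕ, a n * R₀ ^ n) < 1) :
    Summable (fun n : ℕ => (n : ℝ) * a n) ∧
    HasDerivAt (fun z : ℝ => ∑' n : ℕ, a n * z ^ n) (∑' n : ℕ, (n : ℝ) * a n) 1 ∧
    0 ≤ (∑' n : ℕ, (n : ℝ) * a n) ∧
    (∑' n : ℕ, (n : ℝ) * a n) ≤
      ((∑' n : ℕ, a n * R₀ ^ n) - (∑' n : ℕ, a n * (1 : ℝ) ^ n)) / (R₀ - 1) ∧
    ((∑' n : ℕ, a n * R₀ ^ n) - (∑' n : ℕ, a n * (1 : ℝ) ^ n)) / (R₀ - 1) <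
      (1 - (∑' n : ℕ, a n * (1 : ℝ) ^ n)) / (R₀ - 1) ∧
    (1 - (∑' n : ℕ, a n * (1 : ℝ) ^ n)) / (R₀ - 1) ≤ 1 / (R₀ - 1) := by
  have h1R : |(1 : ℝ)| < R₀ := by rwa [abs_one]
  have hderiv_one : ∑' n : ℕ, n * a n * (1 : ℝ) ^ (n - 1) = ∑' n : ℕ, (n : ℝ) * a n := by
    simp only [one_pow, mul_one]
  have hsummable := summable_natCast_mul_mul_pow_pred ha hsum zero_le_one hR₀
  have hderiv := hasDerivAt_tsum_mul_pow ha hsum h1R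
  have hslope := sub_mul_tsum_natCast_mul_mul_pow_pred_le ha hsum zero_le_one hR₀
  simp only [one_pow, mul_one] at hsummable
  rw [hderiv_one] at hderiv hslope
  have hf_one_nonneg : 0 ≤ ∑' n : ℕ, a n * (1 : ℝ) ^ n :=
    tsum_nonneg fun n => by simpa using ha n
  have hR₀_sub : 0 < R₀ - 1 := sub_pos.2 hR₀
  exact ⟨hsummable, hderiv, tsum_nonneg fun n => mul_nonneg n.cast_nonneg (ha n),
    (le_div_iff₀' hR₀_sub).2 hslope, div_lt_div_of_pos_right (by linarith) hR₀_sub,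
    div_le_div_of_nonneg_right (by linarith) hR₀_sub.le⟩

/-- if a power series `f(z) = Σ_{n≥1} aₙ zⁿ` with nonnegative coefficients
converges at some real `R₀ > 1` with `f(R₀) < 1`, then `Σ n·aₙ` converges and
`0 ≤ f′(1) = Σ n·aₙ ≤ (f(R₀) − f(1))/(R₀ − 1) < (1 − f(1))/(R₀ − 1) ≤ 1/(R₀ − 1)`. -/
theorem power_series_deriv_bound (a : ℕ → ℝ) (ha : ∀ n, 0 ≤ a n) (h0 : a 0 = 0)
    (R₀ : ℝ) (hR₀ : 1 < R₀)
    (hsum : Summable fun n : ℕ => a n * R₀ ^ n)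
    (hlt : (∑' n : ℕ, a n * R₀ ^ n) < 1) :
    Summable (fun n : ℕ => (n : ℝ) * a n) ∧
    HasDerivAt (fun z : ℝ => ∑' n : ℕ, a n * z ^ n) (∑' n : ℕ, (n : ℝ) * a n) 1 ∧
    0 ≤ (∑' n : ℕ, (n : ℝ) * a n) ∧
    (∑' n : ℕ, (n : ℝ) * a n) ≤
      ((∑' n : ℕ, a n * R₀ ^ n) - (∑' n : ℕ, a n * (1 : ℝ) ^ n)) / (R₀ - 1) ∧
    ((∑' n : ℕ, a n * R₀ ^ n) - (∑' n : ℕ, a n * (1 : ℝ) ^ n)) / (R₀ - 1) <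
      (1 - (∑' n : ℕ, a n * (1 : ℝ) ^ n)) / (R₀ - 1) ∧
    (1 - (∑' n : ℕ, a n * (1 : ℝ) ^ n)) / (R₀ - 1) ≤ 1 / (R₀ - 1) :=
  power_series_deriv_bound_general a ha R₀ hR₀ hsum hlt
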